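/- arXiv:2102.07936 — 2 statements merged into one kernel-verified Lean document; each statement's English description precedes it below -/
import Mathlib

section
/- Let K ≥ 1, let U_1, …, U_K be finite nonempty action sets, let Q_k : U_k → ℝ for each k, and let M : ℝ^K → ℝ be strictly increasing in each coordinate (for each k, x ↦ M(…, x, …) is strictly monotone increasing when the other coordinates are fixed). Define Q_jt(u) := M(Q_1(u_1), …, Q_K(u_K)). Then the set of maximizers of Q_jt over joint actions equals the product over k of the sets of maximizers of the Q_k; that is, Q_jt satisfies IGM for [Q_k]. -/
/-!
If some agent could switch to a strictly better individual action, strict monotonicity of `M`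
in that coordinate would strictly raise `Q_jt`; so joint maximizers are individual maximizers.
Conversely, monotonicity in each coordinate makes `M` monotone for the product order, so a
profile of individual maximizers dominates every joint action.
-/

open Function

theorem monotone_of_monotone_update {ι : Type*} [Finite ι] [DecidableEq ι] {α : ι → Type*}
    [∀ i, Preorder (α i)] {β : Type*} [Preorder β] {M : (∀ i, α i) → β}
    (hM : ∀ i x, Monotone fun y => M (update x i y)) : Monotone M := by
  intro x y hxy
  cases nonempty_fintype ι
  -- Replace the coordinates of `x` by those of `y` one at a time.
  have key : ∀ s : Finset ι, M x ≤ M (s.piecewise y x) := by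
    intro s
    induction s using Finset.induction_on with
    | empty => simp
    | insert i s hi ih =>
      calc M x ≤ M (s.piecewise y x) := ih
        _ = M (update (s.piecewise y x) i (x i)) := by
          rw [update_eq_self_iff.2 (s.piecewise_eq_of_notMem y x hi).symm]
        _ ≤ M ((insert i s).piecewise y x) := by
          rw [Finset.piecewise_insert]
          exact hM i _ (hxy i)
  simpa using key Finset.univ

theorem strict_monotonicity_igm_general {K : ℕ} (U : Fin K → Type*)
    (Q : ∀ k, U k → ℝ)
    (M : (Fin K → ℝ) → ℝ)
    (hM : ∀ (k : Fin K) (x : Fin K → ℝ),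
      StrictMono (fun y : ℝ => M (Function.update x k y)))
    (Qjt : (∀ k, U k) → ℝ)
    (hQjt : ∀ u, Qjt u = M (fun k => Q k (u k))) :
    {u : ∀ k, U k | ∀ v : ∀ k, U k, Qjt v ≤ Qjt u}
      = {u : ∀ k, U k | ∀ k : Fin K, ∀ v : U k, Q k v ≤ Q k (u k)} := by
  ext u
  simp only [Set.mem_ofPred_eq, hQjt]
  constructor
  · intro hu k v
    have h : M (update (fun j => Q j (u j)) k (Q k v))
        ≤ M (update (fun j => Q j (u j)) k (Q k (u k))) := by
      simpa only [update_eq_self, apply_update (fun j => Q j)] using hu (update u k v)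
    exact (hM k _).le_iff_le.mp h
  · exact fun hu v =>
      monotone_of_monotone_update (fun k x => (hM k x).monotone) fun k => hu k (v k)

/-- **Strict monotonicity is a sufficient condition for IGM (QMIX).** If the mixing
function `M` is strictly increasing in each coordinate, then the maximizer set of
`Q_jt u = M (fun k => Q k (u k))` equals the product of the individual maximizer sets. -/
theorem strict_monotonicity_igm {K : ℕ} (hK : 1 ≤ K) (U : Fin K → Type*)
    [∀ k, Fintype (U k)] [∀ k, Nonempty (U k)]
    (Q : ∀ k, U k → ℝ)
    (M : (Fin K → ℝ) → ℝ)
    (hM : ∀ (k : Fin K) (x : Fin K → ℝ),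
      StrictMono (fun y : ℝ => M (Function.update x k y)))
    (Qjt : (∀ k, U k) → ℝ)
    (hQjt : ∀ u, Qjt u = M (fun k => Q k (u k))) :
    {u : ∀ k, U k | ∀ v : ∀ k, U k, Qjt v ≤ Qjt u}
      = {u : ∀ k, U k | ∀ k : Fin K, ∀ v : U k, Q k v ≤ Q k (u k)} :=
  strict_monotonicity_igm_general U Q M hM Qjt hQjt
end

section
/- Let (Ω, 𝔽, ℙ) be a probability space and let X : Ω → ℝ be an integrable random variable with law μ and quantile function f_μ. Then the expectation of X equals the Lebesgue integral of its quantile function over the unit interval: E[X] = ∫_{(0,1)} f_μ(ω) dω. -/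
open MeasureTheory

/-- The cumulative distribution function of a measure on `ℝ`: `F_μ(x) = μ (-∞, x]`. -/
noncomputable def cdfOf (μ : Measure ℝ) (x : ℝ) : ℝ :=
  (μ (Set.Iic x)).toReal

/-- The quantile function (generalized inverse CDF) of a measure on `ℝ`:
`f_μ(ω) = inf {x | ω ≤ F_μ(x)}`. -/
noncomputable def quantile (μ : Measure ℝ) (ω : ℝ) : ℝ :=
  sInf {x : ℝ | ω ≤ cdfOf μ x}

/-!
On `(0, 1)` the quantile function is the lower adjoint of the CDF: `f_μ ω ≤ x ↔ ω ≤ F_μ x`,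
by right-continuity of `F_μ`. Hence the set `{ω ∈ (0, 1) | f_μ ω ≤ x}` is an interval of length
`F_μ x`, i.e. under Lebesgue measure on `(0, 1)` the random variable `f_μ` has law `μ`, and the
theorem is the change-of-variables formula for this representation of `μ`.
-/

section Quantile

open Set Filter ProbabilityTheory

lemma volume_Iic_inter_Ioo_zero_one {c : ℝ} (hc : c ≤ 1) :
    volume (Iic c ∩ Ioo 0 1) = ENNReal.ofReal c := by
  refine le_antisymm ?_ ?_
  · calc volume (Iic c ∩ Ioo 0 1) ≤ volume (Ioc 0 c) :=
          measure_mono fun ω hω => ⟨hω.2.1, hω.1⟩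
      _ = ENNReal.ofReal c := by rw [Real.volume_Ioc, sub_zero]
  · calc ENNReal.ofReal c = volume (Ioo 0 c) := by rw [Real.volume_Ioo, sub_zero]
      _ ≤ volume (Iic c ∩ Ioo 0 1) :=
          measure_mono fun ω hω => ⟨hω.2.le, hω.1, hω.2.trans_le hc⟩

variable (μ : Measure ℝ)

lemma nonempty_setOf_le_cdf {ω : ℝ} (hω : ω < 1) : {x | ω ≤ cdf μ x}.Nonempty :=
  ((tendsto_cdf_atTop μ).eventually (eventually_ge_nhds hω)).exists

lemma bddBelow_setOf_le_cdf {ω : ℝ} (hω : 0 < ω) : BddBelow {x | ω ≤ cdf μ x} := by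
  obtain ⟨y, hy⟩ := ((tendsto_cdf_atBot μ).eventually (eventually_lt_nhds hω)).exists
  exact ⟨y, fun z hz => le_of_not_gt fun hzy => (hz.trans (monotone_cdf μ hzy.le)).not_gt hy⟩

variable [IsProbabilityMeasure μ]

lemma cdfOf_eq_cdf : cdfOf μ = cdf μ :=
  funext fun x => (cdf_eq_real μ x).symm

lemma quantile_eq_sInf_cdf (ω : ℝ) : quantile μ ω = sInf {x | ω ≤ cdf μ x} := by
  rw [quantile, cdfOf_eq_cdf]

lemma quantile_le_iff {ω : ℝ} (hω : ω ∈ Ioo 0 1) (x : ℝ) :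
    quantile μ ω ≤ x ↔ ω ≤ cdf μ x := by
  rw [quantile_eq_sInf_cdf]
  refine ⟨fun h => ?_, fun h => csInf_le (bddBelow_setOf_le_cdf μ hω.1) h⟩
  have h_right : ∀ y ∈ Ioi x, ω ≤ cdf μ y := fun y hy => by
    obtain ⟨z, hz, hzy⟩ := exists_lt_of_csInf_lt (nonempty_setOf_le_cdf μ hω.2) (h.trans_lt hy)
    exact hz.trans (monotone_cdf μ hzy.le)
  exact ge_of_tendsto (((cdf μ).right_continuous x).mono Ioi_subset_Ici_self).tendsto
    (eventually_nhdsWithin_of_forall h_right)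

lemma quantile_monotoneOn : MonotoneOn (quantile μ) (Ioo 0 1) := fun a ha b hb hab => by
  simp only [quantile_eq_sInf_cdf]
  exact csInf_le_csInf (bddBelow_setOf_le_cdf μ ha.1) (nonempty_setOf_le_cdf μ hb.2)
    fun x hx => hab.trans hx

lemma aemeasurable_quantile : AEMeasurable (quantile μ) (volume.restrict (Ioo 0 1)) :=
  aemeasurable_restrict_of_monotoneOn measurableSet_Ioo (quantile_monotoneOn μ)

theorem map_quantile_volume_Ioo : (volume.restrict (Ioo 0 1)).map (quantile μ) = μ := by
  refine Measure.ext_of_Iic _ _ fun x => ?_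
  have h_preimage : quantile μ ⁻¹' Iic x ∩ Ioo 0 1 = Iic (cdf μ x) ∩ Ioo 0 1 := by
    ext ω
    exact and_congr_left (quantile_le_iff μ · x)
  rw [Measure.map_apply_of_aemeasurable (aemeasurable_quantile μ) measurableSet_Iic,
    Measure.restrict_apply' measurableSet_Ioo, h_preimage,
    volume_Iic_inter_Ioo_zero_one (cdf_le_one μ x), ofReal_cdf]

theorem integral_comp_quantile {E : Type*} [NormedAddCommGroup E] [NormedSpace ℝ E]
    {g : ℝ → E} (hg : AEStronglyMeasurable g μ) :
    ∫ ω in Ioo 0 1, g (quantile μ ω) = ∫ x, g x ∂μ := by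
  rw [← map_quantile_volume_Ioo μ] at hg
  calc ∫ ω in Ioo 0 1, g (quantile μ ω)
      = ∫ x, g x ∂(volume.restrict (Ioo 0 1)).map (quantile μ) :=
        (integral_map (aemeasurable_quantile μ) hg).symm
    _ = ∫ x, g x ∂μ := by rw [map_quantile_volume_Ioo]

theorem integral_quantile : ∫ ω in Ioo 0 1, quantile μ ω = ∫ x, x ∂μ :=
  integral_comp_quantile μ aestronglyMeasurable_id

end Quantile

theorem expectation_eq_integral_quantile_general {Ω : Type*} [MeasurableSpace Ω]
    (ℙ : Measure Ω) [IsProbabilityMeasure ℙ]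
    (X : Ω → ℝ) (hX : Measurable X) :
    (∫ ω, X ω ∂ℙ) = ∫ ω in Set.Ioo (0 : ℝ) 1, quantile (Measure.map X ℙ) ω := by
  have := Measure.isProbabilityMeasure_map (μ := ℙ) hX.aemeasurable
  rw [integral_quantile]
  exact (integral_map hX.aemeasurable aestronglyMeasurable_id).symm

/-- **The expectation of a random variable equals the integral of its quantile function
over the unit interval:** `E[X] = ∫_{(0,1)} f_μ(ω) dω`, where `μ` is the law of `X`. -/
theorem expectation_eq_integral_quantile {Ω : Type*} [MeasurableSpace Ω]
    (ℙ : Measure Ω) [IsProbabilityMeasure ℙ]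
    (X : Ω → ℝ) (hX : Measurable X) (hint : Integrable X ℙ) :
    (∫ ω, X ω ∂ℙ) = ∫ ω in Set.Ioo (0 : ℝ) 1, quantile (Measure.map X ℙ) ω :=
  expectation_eq_integral_quantile_general ℙ X hX
end
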